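/- arXiv:1712.07395 — 6 statements merged into one kernel-verified Lean document; each statement's English description precedes it below -/
import Mathlib

section
/- For B > 1, the matrix H_N^{(1/B, B)} = −(1/B)|0⟩⟨0| − B|N⟩⟨N| + H_N^walk has eigenvalues exactly {−(B + 1/B)} ∪ {−2cos(kπ/(N+1)) : k = 1,...,N}. -/
open Matrix Real Finset

/-- The negative adjacency matrix of the path on vertices `0,…,N`. -/
noncomputable def walkM (N : ℕ) : Matrix (Fin (N+1)) (Fin (N+1)) ℝ :=
  Matrix.of fun i j => if (i:ℕ)+1 = (j:ℕ) ∨ (j:ℕ)+1 = (i:ℕ) then -1 else 0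

/-- `H_N^{(L,R)} = −L|0⟩⟨0| − R|N⟩⟨N| + H_N^walk`. -/
noncomputable def HLR (N : ℕ) (L R : ℝ) : Matrix (Fin (N+1)) (Fin (N+1)) ℝ :=
  walkM N + Matrix.single 0 0 (-L)
    + Matrix.single (Fin.last N) (Fin.last N) (-R)

/-- `μ` is an eigenvalue of the real matrix `M`. -/
def hasEig {n : Type*} [Fintype n] (M : Matrix n n ℝ) (μ : ℝ) : Prop :=
  ∃ v : n → ℝ, v ≠ 0 ∧ M.mulVec v = μ • v

/-! The ansatz `v_j = g (j + 1)` turns the eigenvalue equation into the three-term recurrence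
`g j + g (j + 2) = -μ g (j + 1)`, the diagonal corners becoming the boundary conditions
`g 0 = L g 1` and `g (N + 2) = R g (N + 1)` on two ghost values. For `L = 1/B`, `R = B` the
geometric solution `g j = B ^ j` and the solutions `g j = B sin (jθ) - sin ((j - 1)θ)` with
`(N + 1)θ = kπ` give `N + 1` distinct eigenvalues of an `(N + 1) × (N + 1)` matrix, hence all. -/

lemma walkM_mulVec_apply (N : ℕ) (g : ℕ → ℝ) (i : Fin (N + 1)) :
    (walkM N *ᵥ fun j => g (j + 1)) i =
      -(g i + g (i + 2)) + (if (i : ℕ) = 0 then g 0 else 0)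
        + (if (i : ℕ) = N then g (N + 2) else 0) := by
  have hsplit : ∀ j : ℕ,
      (if (i : ℕ) + 1 = j ∨ j + 1 = i then (-1 : ℝ) else 0) * g (j + 1) =
        (if (i : ℕ) + 1 = j then -g (j + 1) else 0) + (if j + 1 = i then -g (j + 1) else 0) := by
    intro j
    split_ifs <;> first | omega | ring
  simp only [mulVec, dotProduct, walkM, of_apply]
  rw [Fin.sum_univ_eq_sum_range
      (fun j => (if (i : ℕ) + 1 = j ∨ j + 1 = i then (-1 : ℝ) else 0) * g (j + 1)),
    Finset.sum_congr rfl fun j _ => hsplit j, Finset.sum_add_distrib, Finset.sum_ite_eq]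
  obtain ⟨_ | k, _⟩ := i <;>
    simp only [mem_range, Nat.add_right_cancel_iff, sum_ite_eq', Nat.add_eq_zero_iff, one_ne_zero,
      and_false, if_false, sum_const_zero] <;>
    split_ifs <;> (try subst_vars) <;> first | omega | ring_nf

lemma HLR_mulVec_apply_of_boundary (N : ℕ) (L R : ℝ) (g : ℕ → ℝ) (hL : g 0 = L * g 1)
    (hR : g (N + 2) = R * g (N + 1)) (i : Fin (N + 1)) :
    (HLR N L R *ᵥ fun j => g (j + 1)) i = -(g i + g (i + 2)) := by
  simp only [HLR, add_mulVec, Pi.add_apply, single_mulVec, walkM_mulVec_apply,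
    Function.update_apply, Pi.zero_apply, Fin.ext_iff, Fin.val_zero, Fin.val_last]
  split_ifs <;> simp_all <;> ring

lemma hasEig_HLR_of_recurrence {N : ℕ} {L R μ : ℝ} (g : ℕ → ℝ)
    (hrec : ∀ j ≤ N, g j + g (j + 2) = -μ * g (j + 1))
    (hL : g 0 = L * g 1) (hR : g (N + 2) = R * g (N + 1)) (h1 : g 1 ≠ 0) :
    hasEig (HLR N L R) μ := by
  refine ⟨fun j => g (j + 1), fun h => h1 (by simpa using congrFun h 0), funext fun i => ?_⟩
  rw [HLR_mulVec_apply_of_boundary N L R g hL hR, hrec i (Nat.lt_succ_iff.mp i.isLt)]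
  simp only [Pi.smul_apply, smul_eq_mul]
  ring

lemma hasEig_HLR_neg_add_inv (N : ℕ) {B : ℝ} (hB : B ≠ 0) :
    hasEig (HLR N (1 / B) B) (-(B + 1 / B)) := by
  refine hasEig_HLR_of_recurrence (fun j => B ^ j) (fun j _ => ?_) ?_ ?_ (by simpa using hB)
  · field_simp
    ring
  · field_simp
  · ring

lemma sin_sub_add_sin_add (x θ : ℝ) : sin (x - θ) + sin (x + θ) = 2 * cos θ * sin x := by
  rw [sin_sub, sin_add]
  ring

lemma hasEig_HLR_neg_two_mul_cos {N k : ℕ} (hk1 : 1 ≤ k) (hk2 : k ≤ N) {B : ℝ}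
    (hB : B ≠ 0) :
    hasEig (HLR N (1 / B) B) (-2 * cos (k * π / (N + 1))) := by
  set θ : ℝ := k * π / (N + 1) with hθ
  have hθN : ((N : ℝ) + 1) * θ = k * π := by
    rw [hθ]
    field_simp
  have hsin : sin θ ≠ 0 := by
    refine (sin_pos_of_pos_of_lt_pi (by positivity) ?_).ne'
    rw [hθ, div_lt_iff₀ (by positivity)]
    have hkN : (k : ℝ) < N + 1 := by exact_mod_cast Nat.lt_succ_of_le hk2
    nlinarith [pi_pos]
  refine hasEig_HLR_of_recurrence (fun j => B * sin (j * θ) - sin ((j - 1) * θ))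
    (fun j _ => ?_) ?_ ?_ ?_
  · have h := sin_sub_add_sin_add ((j + 1) * θ) θ
    have h' := sin_sub_add_sin_add (j * θ) θ
    push_cast
    ring_nf at h h' ⊢
    linear_combination B * h - h'
  · simp only [Nat.cast_zero, Nat.cast_one, zero_mul, zero_sub, sub_self, one_mul, neg_one_mul,
      mul_zero, sin_zero, sin_neg, sub_neg_eq_add, zero_add, sub_zero]
    field_simp
  · push_cast
    have e1 : ((N : ℝ) + 2) * θ = θ + k * π := by linear_combination hθN
    have e2 : ((N : ℝ) + 2 - 1) * θ = k * π := by linear_combination hθN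
    have e3 : ((N : ℝ) + 1 - 1) * θ = k * π - θ := by linear_combination hθN
    rw [e1, e2, hθN, e3, sin_add_nat_mul_pi, sin_nat_mul_pi, sin_nat_mul_pi_sub]
    ring
  · simpa using ⟨hB, hsin⟩

lemma card_le_of_forall_hasEig {n : Type*} [Fintype n] (M : Matrix n n ℝ) (s : Finset ℝ)
    (hs : ∀ μ ∈ s, hasEig M μ) : s.card ≤ Fintype.card n := by
  choose v hv using hs
  have hvec : ∀ μ : s, Module.End.HasEigenvector (mulVecLin M) μ (v μ μ.2) := fun μ =>
    Module.End.hasEigenvector_iff.mpr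
      ⟨Module.End.mem_eigenspace_iff.mpr (hv μ μ.2).2, (hv μ μ.2).1⟩
  simpa using (Module.End.eigenvectors_linearIndependent' _ _ Subtype.val_injective _
    hvec).fintype_card_le_finrank

lemma hasEig_iff_mem_of_card_eq {n : Type*} [Fintype n] {M : Matrix n n ℝ} {s : Finset ℝ}
    (hs : ∀ μ ∈ s, hasEig M μ) (hcard : s.card = Fintype.card n) (μ : ℝ) :
    hasEig M μ ↔ μ ∈ s := by
  refine ⟨fun hμ => ?_, hs μ⟩
  by_contra hμs
  have := card_le_of_forall_hasEig M (insert μ s) (by simpa [hμ] using hs)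
  rw [card_insert_of_notMem hμs, hcard] at this
  omega

lemma card_image_neg_two_mul_cos (N : ℕ) :
    ((Icc 1 N).image fun k : ℕ => -2 * cos (k * π / (N + 1))).card = N := by
  refine (card_image_of_injOn fun a ha b hb hab => ?_).trans (by simp)
  have hmem : ∀ c ∈ (Icc 1 N : Set ℕ), (c : ℝ) * π / (N + 1) ∈ Set.Icc 0 π := by
    intro c hc
    have hcN : (c : ℝ) ≤ N + 1 := by exact_mod_cast (Finset.mem_Icc.mp hc).2.trans N.le_succ
    refine ⟨by positivity, (div_le_iff₀ (by positivity)).mpr (by nlinarith [pi_pos])⟩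
  have h := injOn_cos (hmem a ha) (hmem b hb) (by simpa using hab)
  field_simp at h
  exact_mod_cast h

lemma neg_two_mul_cos_ne_neg_add_inv {B : ℝ} (hB : 1 < B) (x : ℝ) :
    -2 * cos x ≠ -(B + 1 / B) := by
  have : 2 < B + 1 / B := by
    rw [← sub_pos, show B + 1 / B - 2 = (B - 1) ^ 2 / B by field_simp; ring]
    exact div_pos (by nlinarith) (by linarith)
  nlinarith [cos_le_one x]

/-- For `B > 1`, the eigenvalues of `H_N^{(1/B,B)}` are exactly
`−(B + 1/B)` together with `−2 cos (kπ/(N+1))` for `k = 1,…,N`. -/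
theorem stmt_6 (N : ℕ) (B : ℝ) (hB : 1 < B) :
    ∀ μ : ℝ, hasEig (HLR N (1/B) B) μ ↔
      (μ = -(B + 1/B) ∨ ∃ k : ℕ, 1 ≤ k ∧ k ≤ N ∧ μ = -2 * Real.cos (k * π / (N + 1))) := by
  have hB0 : B ≠ 0 := by positivity
  set S : Finset ℝ :=
    insert (-(B + 1 / B)) ((Icc 1 N).image fun k : ℕ => -2 * cos (k * π / (N + 1)))
  have hS : ∀ μ ∈ S, hasEig (HLR N (1 / B) B) μ := by
    simp only [S, mem_insert, mem_image, mem_Icc, forall_eq_or_imp, forall_exists_index, and_imp]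
    exact ⟨hasEig_HLR_neg_add_inv N hB0,
      fun μ k hk1 hk2 hμ => hμ ▸ hasEig_HLR_neg_two_mul_cos hk1 hk2 hB0⟩
  have hcard : S.card = Fintype.card (Fin (N + 1)) := by
    rw [card_insert_of_notMem, card_image_neg_two_mul_cos, Fintype.card_fin]
    simpa using fun k _ _ => neg_two_mul_cos_ne_neg_add_inv hB _
  intro μ
  rw [hasEig_iff_mem_of_card_eq hS hcard]
  simp only [S, mem_insert, mem_image, mem_Icc]
  grind
end

section
/- The eigenvalues of H_N^{(1,0)} = −|0⟩⟨0| + H_N^walk are exactly −2cos((2k+1)π/(2N+3)) for k = 0,...,N; in particular its smallest eigenvalue is −2cos(π/(2N+3)) and its spectral gap is −2cos(3π/(2N+3)) + 2cos(π/(2N+3)). -/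
open Matrix Real Finset

/-!
Put `θ = (2k+1)π/(2N+3)` and `v_j = cos ((j + 1/2) θ)`. The identity
`cos ((j - 1/2) θ) + cos ((j + 3/2) θ) = 2 cos θ · cos ((j + 1/2) θ)` is the eigen-equation of
the walk in the bulk. At the left end `v_{-1} = v_0` (cosine is even), which is exactly what the
extra `-|0⟩⟨0|` term supplies; at the right end `v_{N+1} = cos ((2k+1)π/2) = 0`. So
`-2 cos θ_k` is an eigenvalue for each `k ≤ N`; these `N + 1` values are distinct since cosine is
strictly decreasing on `[0, π]`, hence they are the whole spectrum of the `(N+1) × (N+1)` matrix.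
-/

theorem exists_eq_of_hasEig_of_injective {n : Type*} [Fintype n] {M : Matrix n n ℝ}
    {E : n → ℝ} (hE : Function.Injective E) (hEig : ∀ i, hasEig M (E i)) {μ : ℝ}
    (hμ : hasEig M μ) : ∃ i, E i = μ := by
  by_contra! hne
  let E' : Option n → ℝ := fun o => o.elim μ E
  have hE' : Function.Injective E' := by
    rintro (_ | i) (_ | j) hij
    · rfl
    · exact absurd hij.symm (hne j)
    · exact absurd hij (hne i)
    · exact congrArg some (hE hij)
  have hEig' : ∀ o, hasEig M (E' o) := by
    rintro (_ | i)
    exacts [hμ, hEig i]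
  choose v hv0 hv using hEig'
  have hli : LinearIndependent ℝ v :=
    Module.End.eigenvectors_linearIndependent' M.mulVecLin E' hE' v fun o =>
      Module.End.hasEigenvector_iff.mpr ⟨Module.End.mem_eigenspace_iff.mpr (hv o), hv0 o⟩
  have hcard := hli.fintype_card_le_finrank
  rw [Module.finrank_fintype_fun_eq_card, Fintype.card_option] at hcard
  omega

/-- The walk extended by ghost sites `-1` and `N + 1`: the boundary conditions on `f` encode the
`-|0⟩⟨0|` term and the missing right neighbour of `N`. -/
theorem HLR_one_zero_mulVec_apply (N : ℕ) (f : ℤ → ℝ) (hleft : f (-1) = f 0)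
    (hright : f (N + 1) = 0) (i : Fin (N + 1)) :
    (HLR N 1 0 *ᵥ fun j => f j) i = -(f (i - 1) + f (i + 1)) := by
  simp only [HLR, mulVec, dotProduct, Matrix.add_apply, walkM, of_apply, single_apply, add_mul,
    sum_add_distrib, ite_mul, neg_mul, one_mul, zero_mul, neg_zero, ite_self, add_zero, ite_and]
  rw [Fin.sum_univ_eq_sum_range (fun j => if (i:ℕ) + 1 = j ∨ j + 1 = (i:ℕ) then -f j else 0)]
  have hsplit : ∀ j : ℕ, (if (i:ℕ) + 1 = j ∨ j + 1 = i then -f j else 0) =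
      (if (i:ℕ) + 1 = j then -f j else 0) + (if j + 1 = (i:ℕ) then -f j else 0) := by
    intro j; split_ifs <;> first | omega | simp
  simp only [hsplit, sum_add_distrib, sum_ite_eq, mem_range]
  have hnext : (if (i:ℕ) + 1 < N + 1 then -f ((i + 1 : ℕ) : ℤ) else 0) = -f (i + 1) := by
    split_ifs with h
    · push_cast; rfl
    · rw [show (i:ℕ) = N by omega, hright, neg_zero]
  rw [hnext]
  obtain ⟨_ | m, hm⟩ := i
  · simp [hleft]
  · simp [show m ≤ N by omega]

theorem hasEig_HLR_one_zero_neg_two_mul_cos (N : ℕ) {θ : ℝ} (hright : cos ((N + 3 / 2) * θ) = 0)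
    (hleft : cos (θ / 2) ≠ 0) : hasEig (HLR N 1 0) (-2 * cos θ) := by
  set f : ℤ → ℝ := fun j => cos ((j + 1 / 2) * θ)
  have hf0 : f (-1) = f 0 := by
    simp only [f, Int.cast_neg, Int.cast_one, Int.cast_zero, ← cos_neg (((0:ℝ) + 1 / 2) * θ)]
    ring_nf
  have hfN : f (N + 1) = 0 := by
    simp only [f, Int.cast_add, Int.cast_natCast, Int.cast_one, ← hright]
    ring_nf
  refine ⟨fun j => f j, fun hv => hleft ?_, funext fun i => ?_⟩
  · simpa [f, div_eq_inv_mul] using congrFun hv 0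
  · rw [HLR_one_zero_mulVec_apply N f hf0 hfN, Pi.smul_apply, smul_eq_mul]
    simp only [f, Int.cast_sub, Int.cast_add, Int.cast_one, cos_add_cos]
    ring_nf
    rw [cos_neg]

noncomputable def walkEigenvalue (N k : ℕ) : ℝ :=
  -2 * cos ((2 * k + 1) * π / (2 * N + 3))

theorem walkEigenvalue_strictMonoOn (N : ℕ) : StrictMonoOn (walkEigenvalue N) (Set.Iic N) := by
  intro a _ b hb hab
  have hden : (0:ℝ) < 2 * N + 3 := by positivity
  have hb' : (b:ℝ) ≤ N := by exact_mod_cast hb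
  have hab' : (a:ℝ) < b := by exact_mod_cast hab
  have hangle : (2 * a + 1) * π / (2 * N + 3) < (2 * b + 1) * π / (2 * N + 3) := by
    gcongr
  have := strictAntiOn_cos ⟨by positivity, (hangle.trans_le ?_).le⟩ ⟨by positivity, ?_⟩ hangle
  · simp only [walkEigenvalue]; linarith
  all_goals rw [div_le_iff₀ hden]; nlinarith [pi_pos]

theorem hasEig_HLR_one_zero_walkEigenvalue {N k : ℕ} (hk : k ≤ N) :
    hasEig (HLR N 1 0) (walkEigenvalue N k) := by
  have hk' : (k:ℝ) ≤ N := by exact_mod_cast hk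
  refine hasEig_HLR_one_zero_neg_two_mul_cos N ?_ (cos_pos_of_mem_Ioo ⟨?_, ?_⟩).ne'
  · rw [cos_eq_zero_iff]
    exact ⟨k, by field_simp; push_cast; ring⟩
  · have : 0 < (2 * k + 1) * π / (2 * N + 3) / 2 := by positivity
    linarith [pi_pos]
  · rw [div_div, div_lt_iff₀ (by positivity)]
    nlinarith [pi_pos]

theorem hasEig_HLR_one_zero_iff (N : ℕ) (μ : ℝ) :
    hasEig (HLR N 1 0) μ ↔ ∃ k ≤ N, μ = walkEigenvalue N k := by
  refine ⟨fun hμ => ?_, fun ⟨k, hk, hμ⟩ => hμ ▸ hasEig_HLR_one_zero_walkEigenvalue hk⟩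
  have hinj : Function.Injective fun k : Fin (N + 1) => walkEigenvalue N k := fun a b hab =>
    Fin.ext <| (walkEigenvalue_strictMonoOn N).injOn (Nat.le_of_lt_succ a.2)
      (Nat.le_of_lt_succ b.2) hab
  obtain ⟨k, rfl⟩ := exists_eq_of_hasEig_of_injective hinj
    (fun k => hasEig_HLR_one_zero_walkEigenvalue (Nat.le_of_lt_succ k.2)) hμ
  exact ⟨k, Nat.le_of_lt_succ k.2, rfl⟩

/-- The eigenvalues of `H_N^{(1,0)} = −|0⟩⟨0| + H_N^walk` are exactly
`−2 cos ((2k+1)π/(2N+3))` for `k = 0,…,N`; in particular its smallest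
eigenvalue is `−2 cos (π/(2N+3))` and its second smallest eigenvalue is
`−2 cos (3π/(2N+3))`, so the spectral gap is their difference. -/
theorem stmt_10 (N : ℕ) (hN : 1 ≤ N) :
    (∀ μ : ℝ, hasEig (HLR N 1 0) μ ↔
      ∃ k : ℕ, k ≤ N ∧ μ = -2 * Real.cos ((2 * k + 1) * π / (2 * N + 3))) ∧
    IsLeast {μ : ℝ | hasEig (HLR N 1 0) μ} (-2 * Real.cos (π / (2 * N + 3))) ∧
    IsLeast {μ : ℝ | hasEig (HLR N 1 0) μ ∧ μ ≠ -2 * Real.cos (π / (2 * N + 3))}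
      (-2 * Real.cos (3 * π / (2 * N + 3))) := by
  have hmono := walkEigenvalue_strictMonoOn N
  have h0 : walkEigenvalue N 0 = -2 * cos (π / (2 * N + 3)) := by simp [walkEigenvalue]
  have h1 : walkEigenvalue N 1 = -2 * cos (3 * π / (2 * N + 3)) := by norm_num [walkEigenvalue]
  rw [← h0, ← h1]
  refine ⟨hasEig_HLR_one_zero_iff N, ⟨hasEig_HLR_one_zero_walkEigenvalue N.zero_le, ?_⟩,
    ⟨⟨hasEig_HLR_one_zero_walkEigenvalue hN, hmono.injOn.ne hN N.zero_le one_ne_zero⟩, ?_⟩⟩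
  · rintro μ hμ
    obtain ⟨k, hk, rfl⟩ := (hasEig_HLR_one_zero_iff N μ).mp hμ
    exact hmono.monotoneOn (Nat.zero_le N) hk k.zero_le
  · rintro μ ⟨hμ, hne⟩
    obtain ⟨k, hk, rfl⟩ := (hasEig_HLR_one_zero_iff N μ).mp hμ
    have hk0 : k ≠ 0 := by rintro rfl; exact hne rfl
    exact hmono.monotoneOn hN hk (Nat.one_le_iff_ne_zero.mpr hk0)
end

section
/- The normalized ground state of H_N^{(1,0)} (eigenvector for eigenvalue −2cos(π/(2N+3)) with unit ℓ² norm and positive entries) has its entry at position N (the end without the self-loop) of magnitude O(N^{−3/2}) and its entry at position 0 of magnitude Θ(N^{−1/2}): precisely, there exist constants c, C > 0 such that for all sufficiently large N the entry at N is at most C·N^{−3/2} and the entry at 0 is at least c·N^{−1/2}. -/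
open Matrix Real Finset

/-!
With `μ = -2 cos θ`, the eigenvalue equation in the rows `1, …, N` of `H_N^{(L,0)}` is the
recurrence `u (k + 2) = 2 cos θ u (k + 1) - u k` solved by `sin (k θ)`, read from the end `N`,
where the loop-free last row acts as a zero entry at the ghost vertex `N + 1`. Hence
`v x ∝ sin ((N + 1 - x) θ)`. For `θ = π / (2N + 3)` the cosines in `sin² = (1 - cos 2·) / 2`
telescope to give `∑_{k=1}^{N+1} sin² (k θ) = (2N + 3) / 4` exactly, so a unit eigenvector has
`v x ^ 2 = 4 sin² ((N + 1 - x) θ) / (2N + 3)`. At `x = N` this is at most `4 θ² / (2N + 3)`;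
at `x = 0`, Jordan's inequality gives `sin ((N + 1) θ) ≥ 2 (N + 1) / (2N + 3)`.
-/

lemma sum_ite_val_eq_extend {M : Type*} [AddCommMonoid M] {n : ℕ} (v : Fin n → M) (m : ℕ) :
    ∑ k : Fin n, (if (k : ℕ) = m then v k else 0) = Function.extend Fin.val v 0 m := by
  by_cases hm : m < n
  · lift m to Fin n using hm
    simp [Fin.val_inj, Fin.val_injective.extend_apply]
  · rw [Function.extend_apply' _ _ _ (by rintro ⟨k, rfl⟩; exact hm k.isLt)]
    exact Finset.sum_eq_zero fun k _ => if_neg (by omega)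

lemma walkM_mulVec_succ {N i : ℕ} (hi : i + 1 < N + 1) (v : Fin (N + 1) → ℝ) :
    (walkM N *ᵥ v) ⟨i + 1, hi⟩ =
      -(Function.extend Fin.val v 0 i + Function.extend Fin.val v 0 (i + 2)) := by
  have hrow : ∀ k : Fin (N + 1), walkM N ⟨i + 1, hi⟩ k * v k =
      -((if (k : ℕ) = i then v k else 0) + (if (k : ℕ) = i + 2 then v k else 0)) := by
    intro k
    simp only [walkM, of_apply]
    split_ifs <;> first | omega | ring
  simp only [mulVec, dotProduct, hrow, Finset.sum_neg_distrib, Finset.sum_add_distrib,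
    sum_ite_val_eq_extend]

lemma HLR_mulVec_succ {N i : ℕ} (hi : i + 1 < N + 1) (L : ℝ) (v : Fin (N + 1) → ℝ) :
    (HLR N L 0 *ᵥ v) ⟨i + 1, hi⟩ =
      -(Function.extend Fin.val v 0 i + Function.extend Fin.val v 0 (i + 2)) := by
  simp [HLR, add_mulVec, walkM_mulVec_succ, single_mulVec]

lemma mul_sin_eq_of_recurrence {θ : ℝ} {u : ℕ → ℝ} {n : ℕ} (h0 : u 0 = 0)
    (hrec : ∀ k, k + 2 ≤ n → u (k + 2) = 2 * cos θ * u (k + 1) - u k) :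
    ∀ k ≤ n, u k * sin θ = u 1 * sin (k * θ) := by
  intro k
  induction k using Nat.strong_induction_on with
  | _ k ih =>
    match k with
    | 0 => simp [h0]
    | 1 => simp
    | k + 2 =>
      intro hk
      have hsin :
          sin ((k + 2 : ℕ) * θ) = 2 * cos θ * sin ((k + 1 : ℕ) * θ) - sin (k * θ) := by
        have := two_mul_sin_mul_cos ((k + 1 : ℕ) * θ) θ
        push_cast at this ⊢
        rw [show ((k:ℝ) + 1) * θ - θ = k * θ by ring,
          show ((k:ℝ) + 1) * θ + θ = (k + 2) * θ by ring] at this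
        linarith
      rw [hrec k hk, hsin]
      linear_combination 2 * cos θ * ih (k + 1) (by omega) (by omega) - ih k (by omega) (by omega)

lemma mul_sin_eq_of_HLR_mulVec_eq {N : ℕ} {L θ : ℝ} {v : Fin (N + 1) → ℝ}
    (hv : HLR N L 0 *ᵥ v = (-2 * cos θ) • v) (x : Fin (N + 1)) :
    v x * sin θ = v (Fin.last N) * sin ((N + 1 - x : ℝ) * θ) := by
  set w := Function.extend Fin.val v 0
  have hw : ∀ y : Fin (N + 1), w y = v y := Fin.val_injective.extend_apply v 0
  have key := mul_sin_eq_of_recurrence (θ := θ) (u := fun k => w (N + 1 - k)) (n := N + 1)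
    (Function.extend_apply' _ _ _ (by rintro ⟨y, hy⟩; omega)) (by
      intro k hk
      obtain ⟨i, rfl⟩ : ∃ i, N = i + k + 1 := ⟨N - k - 1, by omega⟩
      have hrow := congrFun hv ⟨i + 1, by omega⟩
      rw [HLR_mulVec_succ, Pi.smul_apply, smul_eq_mul, ← hw] at hrow
      simp only [show i + k + 1 + 1 - (k + 2) = i by omega,
        show i + k + 1 + 1 - (k + 1) = i + 1 by omega, show i + k + 1 + 1 - k = i + 2 by omega]
      linarith) (N + 1 - x) (by omega)
  simp only [show N + 1 - (N + 1 - (x : ℕ)) = x by omega, Nat.add_sub_cancel, hw] at key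
  rw [key, ← hw (Fin.last N), Fin.val_last, Nat.cast_sub x.isLt.le]
  push_cast
  ring_nf

lemma sin_pi_div_pos {x : ℝ} (hx : 1 < x) : 0 < sin (π / x) :=
  sin_pos_of_pos_of_lt_pi (div_pos pi_pos (by linarith)) (div_lt_self pi_pos hx)

lemma two_mul_sin_mul_sum_cos (θ : ℝ) (M : ℕ) :
    2 * sin θ * ∑ k ∈ range M, cos (2 * ((k + 1) * θ)) = sin ((2 * M + 1) * θ) - sin θ := by
  induction M with
  | zero => simp
  | succ M ih =>
    rw [sum_range_succ, mul_add, ih, two_mul_sin_mul_cos]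
    push_cast
    rw [show θ - 2 * ((M + 1) * θ) = -((2 * M + 1) * θ) by ring, sin_neg]
    ring_nf

lemma sum_range_sin_sq {M : ℕ} (hM : 0 < M) :
    ∑ k ∈ range M, sin ((k + 1) * (π / (2 * M + 1))) ^ 2 = (2 * M + 1) / 4 := by
  set θ := π / (2 * M + 1)
  have hθ : (2 * M + 1) * θ = π := mul_div_cancel₀ _ (by positivity)
  have hsin : sin θ ≠ 0 := (sin_pi_div_pos (by norm_cast; omega)).ne'
  have hcos : ∑ k ∈ range M, cos (2 * ((k + 1) * θ)) = -1 / 2 := by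
    refine mul_left_cancel₀ (mul_ne_zero two_ne_zero hsin) ?_
    rw [two_mul_sin_mul_sum_cos, hθ, sin_pi]
    ring
  simp only [sin_sq_eq_half_sub, sum_sub_distrib, ← sum_div, hcos, sum_const, card_range,
    nsmul_eq_mul]
  ring

lemma sum_univ_sin_sq_reflect (N : ℕ) :
    ∑ x : Fin (N + 1), sin ((N + 1 - x : ℝ) * (π / (2 * N + 3))) ^ 2 = (2 * N + 3) / 4 := by
  have h := sum_range_sin_sq (M := N + 1) N.succ_pos
  rw [← Fin.sum_univ_eq_sum_range, ← Equiv.sum_comp Fin.revPerm] at h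
  push_cast at h
  rw [show 2 * ((N : ℝ) + 1) + 1 = 2 * N + 3 by ring] at h
  rw [← h]
  refine sum_congr rfl fun x _ => ?_
  rw [Fin.revPerm_apply, Fin.val_rev, Nat.cast_sub (by omega)]
  push_cast
  ring_nf

lemma sq_mul_eq_of_HLR_mulVec_eq {N : ℕ} {v : Fin (N + 1) → ℝ} (hnorm : ∑ x, v x ^ 2 = 1)
    (hv : HLR N 1 0 *ᵥ v = (-2 * cos (π / (2 * N + 3))) • v) (x : Fin (N + 1)) :
    v x ^ 2 * (2 * N + 3) = 4 * sin ((N + 1 - x : ℝ) * (π / (2 * N + 3))) ^ 2 := by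
  set θ := π / (2 * N + 3)
  have hform := mul_sin_eq_of_HLR_mulVec_eq hv
  have hsin : sin θ ^ 2 ≠ 0 := pow_ne_zero 2 (sin_pi_div_pos (by norm_cast; omega)).ne'
  have hlast : 4 * sin θ ^ 2 = v (Fin.last N) ^ 2 * (2 * N + 3) := calc
    4 * sin θ ^ 2 = 4 * ∑ y, (v y * sin θ) ^ 2 := by
      simp only [mul_pow, ← sum_mul, hnorm, one_mul]
    _ = 4 * v (Fin.last N) ^ 2 * ∑ y : Fin (N + 1), sin ((N + 1 - y : ℝ) * θ) ^ 2 := by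
      simp only [hform, mul_pow, ← mul_sum]; ring
    _ = v (Fin.last N) ^ 2 * (2 * N + 3) := by rw [sum_univ_sin_sq_reflect]; ring
  refine mul_right_cancel₀ hsin ?_
  linear_combination
    (2 * N + 3) * congrArg (· ^ 2) (hform x) - sin ((N + 1 - x : ℝ) * θ) ^ 2 * hlast

lemma sq_last_mul_cube_le_pi_sq {N : ℕ} {v : Fin (N + 1) → ℝ} (hnorm : ∑ x, v x ^ 2 = 1)
    (hv : HLR N 1 0 *ᵥ v = (-2 * cos (π / (2 * N + 3))) • v) :
    v (Fin.last N) ^ 2 * N ^ 3 ≤ π ^ 2 := by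
  have h := sq_mul_eq_of_HLR_mulVec_eq hnorm hv (Fin.last N)
  rw [Fin.val_last, add_sub_cancel_left, one_mul] at h
  have hq : (0 : ℝ) < 2 * N + 3 := by positivity
  have hsin : sin (π / (2 * N + 3)) * (2 * N + 3) ≤ π := by
    rw [← le_div_iff₀ hq]
    exact sin_le (by positivity)
  have hcube : (N : ℝ) ^ 3 * 4 ≤ (2 * N + 3) ^ 3 := by
    nlinarith [pow_le_pow_left₀ (by positivity : (0 : ℝ) ≤ 2 * N)
      (by linarith : (2 : ℝ) * N ≤ 2 * N + 3) 3]
  calc v (Fin.last N) ^ 2 * N ^ 3 ≤ v (Fin.last N) ^ 2 * (2 * N + 3) ^ 3 / 4 := by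
        nlinarith [sq_nonneg (v (Fin.last N))]
    _ = (sin (π / (2 * N + 3)) * (2 * N + 3)) ^ 2 := by
        linear_combination (2 * N + 3) ^ 2 / 4 * h
    _ ≤ π ^ 2 :=
      pow_le_pow_left₀ (mul_nonneg (sin_pi_div_pos (by norm_cast; omega)).le hq.le) hsin 2

lemma one_le_four_mul_mul_sq_zero {N : ℕ} (hN : 1 ≤ N) {v : Fin (N + 1) → ℝ}
    (hnorm : ∑ x, v x ^ 2 = 1)
    (hv : HLR N 1 0 *ᵥ v = (-2 * cos (π / (2 * N + 3))) • v) :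
    1 ≤ 4 * N * v 0 ^ 2 := by
  have h := sq_mul_eq_of_HLR_mulVec_eq hnorm hv 0
  rw [Fin.val_zero, Nat.cast_zero, sub_zero] at h
  have hq : (0 : ℝ) < 2 * N + 3 := by positivity
  have hangle : (N + 1) * (π / (2 * N + 3)) ≤ π / 2 := by
    rw [mul_div_assoc', div_le_div_iff₀ hq two_pos]
    nlinarith [pi_pos]
  have hsin : 2 * (N + 1) ≤ sin ((N + 1) * (π / (2 * N + 3))) * (2 * N + 3) := by
    rw [← div_le_iff₀ hq]
    calc 2 * (N + 1) / (2 * N + 3) = 2 / π * ((N + 1) * (π / (2 * N + 3))) := by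
          field_simp [pi_ne_zero]
      _ ≤ _ := mul_le_sin (by positivity) hangle
  have hsq := pow_le_pow_left₀ (by positivity) hsin 2
  have hcube : v 0 ^ 2 * (2 * N + 3) ^ 3 =
      4 * (sin ((N + 1) * (π / (2 * N + 3))) * (2 * N + 3)) ^ 2 := by
    linear_combination (2 * N + 3) ^ 2 * h
  have hN' : (1 : ℝ) ≤ N := by exact_mod_cast hN
  refine le_of_mul_le_mul_right ?_ (pow_pos hq 3)
  nlinarith [mul_le_mul_of_nonneg_left hsq (by positivity : (0 : ℝ) ≤ N)]

lemma rpow_neg_div_two_sq_mul {x : ℝ} (hx : 0 < x) (r : ℝ) :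
    (x ^ (-r / 2)) ^ 2 * x ^ r = 1 := by
  rw [← rpow_natCast, ← rpow_mul hx.le, ← rpow_add hx]
  norm_num

/-- The normalized, entrywise-positive ground state of `H_N^{(1,0)}` (for the
eigenvalue `−2 cos (π/(2N+3))`) has entry at position `N` of size `O(N^{−3/2})`
and entry at position `0` of size `Ω(N^{−1/2})`. -/
theorem stmt_12 :
    ∃ c C : ℝ, 0 < c ∧ 0 < C ∧ ∃ N₀ : ℕ, ∀ N : ℕ, N₀ ≤ N →
      ∀ v : Fin (N+1) → ℝ,
        (∑ x, v x ^ 2 = 1) → (∀ x, 0 < v x) →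
        (HLR N 1 0).mulVec v = (-2 * Real.cos (π / (2 * N + 3))) • v →
        v (Fin.last N) ≤ C * (N : ℝ) ^ (-(3:ℝ)/2) ∧
        c * (N : ℝ) ^ (-(1:ℝ)/2) ≤ v 0 := by
  refine ⟨1 / 2, π, by norm_num, pi_pos, 1, fun N hN v hnorm hpos hv => ⟨?_, ?_⟩⟩
  · have hpow := rpow_neg_div_two_sq_mul (Nat.cast_pos.mpr hN : (0 : ℝ) < N) 3
    have hlast := sq_last_mul_cube_le_pi_sq hnorm hv
    rw [rpow_ofNat] at hpow
    refine le_of_pow_le_pow_left₀ two_ne_zero (by positivity) ?_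
    nlinarith [mul_le_mul_of_nonneg_right hlast (sq_nonneg ((N : ℝ) ^ (-(3:ℝ)/2)))]
  · have hpow := rpow_neg_div_two_sq_mul (Nat.cast_pos.mpr hN : (0 : ℝ) < N) 1
    have hzero := one_le_four_mul_mul_sq_zero hN hnorm hv
    rw [rpow_one] at hpow
    refine le_of_pow_le_pow_left₀ two_ne_zero (hpos 0).le ?_
    nlinarith [mul_le_mul_of_nonneg_right hzero (sq_nonneg ((N : ℝ) ^ (-(1:ℝ)/2)))]
end

section
/- If L ≤ 1 and R ≤ 1, then all eigenvalues of H_N^{(L,R)} = −L|0⟩⟨0| − R|N⟩⟨N| + H_N^walk are at least −2. -/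
open Matrix Real Finset

/-!
Off the diagonal, `H_N^{(L,R)}` has only nonpositive entries, and its row sums are `-2` in the
bulk and `-1 - L`, `-1 - R` (or `-L - R` when `N = 0`) at the ends, hence all at least `-2`.
For an eigenvector `v`, possibly replaced by `-v`, pick an index `i` where `v i > 0` is maximal;
then `μ v i = ∑ j, H i j v j ≥ (∑ j, H i j) v i ≥ -2 v i`.
-/

section ZMatrix

variable {n : Type*} [Fintype n] {M : Matrix n n ℝ} {c μ : ℝ}

theorem le_of_mulVec_eq_smul_of_exists_pos (hoff : ∀ i j, i ≠ j → M i j ≤ 0)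
    (hrow : ∀ i, c ≤ ∑ j, M i j) {v : n → ℝ} (hv : M *ᵥ v = μ • v) (hpos : ∃ i, 0 < v i) :
    c ≤ μ := by
  obtain ⟨k, hk⟩ := hpos
  obtain ⟨i, -, hi⟩ := Finset.exists_max_image univ v ⟨k, mem_univ k⟩
  have hvi : 0 < v i := hk.trans_le (hi k (mem_univ k))
  have hterm : ∀ j, M i j * v i ≤ M i j * v j := fun j => by
    rcases eq_or_ne i j with rfl | hij
    · rfl
    · exact mul_le_mul_of_nonpos_left (hi j (mem_univ j)) (hoff i j hij)
  refine le_of_mul_le_mul_right ?_ hvi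
  calc c * v i ≤ (∑ j, M i j) * v i := mul_le_mul_of_nonneg_right (hrow i) hvi.le
    _ = ∑ j, M i j * v i := Finset.sum_mul ..
    _ ≤ ∑ j, M i j * v j := Finset.sum_le_sum fun j _ => hterm j
    _ = μ * v i := by simpa [mulVec, dotProduct] using congrFun hv i

theorem le_of_hasEig_of_offDiag_nonpos (hoff : ∀ i j, i ≠ j → M i j ≤ 0)
    (hrow : ∀ i, c ≤ ∑ j, M i j) (hμ : hasEig M μ) : c ≤ μ := by
  obtain ⟨v, hv0, hv⟩ := hμ
  obtain ⟨k, hk⟩ := Function.ne_iff.mp hv0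
  rcases hk.lt_or_gt with hneg | hpos
  · refine le_of_mulVec_eq_smul_of_exists_pos hoff hrow (v := -v) ?_ ⟨k, by simpa using hneg⟩
    rw [mulVec_neg, hv, smul_neg]
  · exact le_of_mulVec_eq_smul_of_exists_pos hoff hrow hv ⟨k, hpos⟩

end ZMatrix

theorem Fin.sum_ite_val_eq {M : Type*} [AddCommMonoid M] (n m : ℕ) (c : M) :
    ∑ j : Fin n, (if (j:ℕ) = m then c else 0) = if m < n then c else 0 := by
  rw [Fin.sum_univ_eq_sum_range (fun j => if j = m then c else 0), Finset.sum_ite_eq']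
  simp

theorem walkM_rowSum (N : ℕ) (i : Fin (N+1)) :
    ∑ j, walkM N i j = -(if (i:ℕ) < N then 1 else 0) - (if 0 < (i:ℕ) then 1 else 0) := by
  have hsplit : ∀ j : Fin (N+1), walkM N i j = (if (j:ℕ) = i + 1 then -1 else 0)
      + (if 0 < (i:ℕ) then (if (j:ℕ) = i - 1 then -1 else 0) else 0) := fun j => by
    simp only [walkM, of_apply]; split_ifs <;> first | omega | norm_num
  simp only [hsplit, Finset.sum_add_distrib, Finset.sum_ite_irrel, Fin.sum_ite_val_eq]
  split_ifs <;> first | omega | norm_num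

theorem walkM_apply_nonpos (N : ℕ) (i j : Fin (N+1)) : walkM N i j ≤ 0 := by
  simp only [walkM, of_apply]
  split_ifs <;> norm_num

theorem HLR_apply_of_ne {N : ℕ} (L R : ℝ) {i j : Fin (N+1)} (hij : i ≠ j) :
    HLR N L R i j = walkM N i j := by
  have hne : ∀ a, ¬(a = i ∧ a = j) := fun a h => hij (h.1.symm.trans h.2)
  simp [HLR, hne]

theorem HLR_rowSum (N : ℕ) (L R : ℝ) (i : Fin (N+1)) :
    ∑ j, HLR N L R i j = -(if (i:ℕ) < N then 1 else R) - (if 0 < (i:ℕ) then 1 else L) := by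
  simp only [HLR, Matrix.add_apply, Finset.sum_add_distrib, walkM_rowSum, single_apply, ite_and,
    Finset.sum_ite_irrel, Finset.sum_ite_eq, mem_univ, if_true, sum_const_zero]
  simp only [Fin.ext_iff, Fin.val_zero, Fin.val_last]
  split_ifs <;> first | omega | ring

/-- If `L ≤ 1` and `R ≤ 1`, then all eigenvalues of `H_N^{(L,R)}` are at
least `−2`. -/
theorem stmt_13 (N : ℕ) (L R : ℝ) (hL : L ≤ 1) (hR : R ≤ 1) :
    ∀ μ : ℝ, hasEig (HLR N L R) μ → -2 ≤ μ := by
  refine fun μ => le_of_hasEig_of_offDiag_nonpos (fun i j hij => ?_) (fun i => ?_)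
  · rw [HLR_apply_of_ne L R hij]
    exact walkM_apply_nonpos N i j
  · rw [HLR_rowSum]
    split_ifs <;> linarith
end

section
/- For integers N and z with 2 ≤ z < (N+1)/2, the ratio C(N−z+1, z) / C(N, z) is at most 1 − z/N; consequently the square root of this ratio is at most 1 − z/(2N). -/
open Finset

/-- For `2 ≤ z < (N+1)/2`, the ratio `C(N−z+1, z) / C(N, z)` is at most
`1 − z/N`, and its square root is at most `1 − z/(2N)`. -/
theorem stmt_16 (N z : ℕ) (hz : 2 ≤ z) (hzN : (z : ℝ) < ((N : ℝ) + 1) / 2) :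
    ((N - z + 1).choose z : ℝ) / (N.choose z : ℝ) ≤ 1 - (z : ℝ) / N ∧
    Real.sqrt (((N - z + 1).choose z : ℝ) / (N.choose z : ℝ)) ≤ 1 - (z : ℝ) / (2 * N) := by
  have h2z : 2 * z ≤ N := by
    have h : (2 * z : ℝ) < N + 1 := by linarith
    have h' : 2 * z < N + 1 := by exact_mod_cast h
    omega
  have hzleN : z ≤ N := by omega
  have hNpos : (0:ℝ) < N := by
    have : 0 < N := by omega
    exact_mod_cast this
  have hCpos : (0:ℝ) < (N.choose z : ℝ) := by
    exact_mod_cast Nat.choose_pos hzleN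
  have hmono : (N - z + 1).choose z ≤ (N - 1).choose z :=
    Nat.choose_le_choose z (by omega)
  have key : (N - 1).choose z * N = N.choose z * (N - z) := by
    have h := Nat.choose_mul_succ_eq (N - 1) z
    rw [Nat.sub_add_cancel (by omega : 1 ≤ N)] at h
    exact h
  have keyR : ((N - 1).choose z : ℝ) * N = (N.choose z : ℝ) * ((N : ℝ) - z) := by
    have := congrArg (Nat.cast : ℕ → ℝ) key
    push_cast [Nat.cast_sub hzleN] at this
    linarith
  have h1 : ((N - z + 1).choose z : ℝ) / (N.choose z : ℝ) ≤ 1 - (z : ℝ) / N := by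
    rw [div_le_iff₀ hCpos]
    have heq : (1 - (z : ℝ) / N) * (N.choose z : ℝ) = ((N - 1).choose z : ℝ) := by
      field_simp
      nlinarith [keyR]
    rw [heq]
    exact_mod_cast hmono
  refine ⟨h1, ?_⟩
  rw [Real.sqrt_le_iff]
  have h0 : 0 ≤ 1 - (z : ℝ) / (2 * N) := by
    rw [sub_nonneg, div_le_iff₀ (by positivity)]
    have : (z : ℝ) ≤ N := by exact_mod_cast hzleN
    linarith
  refine ⟨h0, le_trans h1 ?_⟩
  have ha : 2 * ((z : ℝ) / (2 * N)) = (z : ℝ) / N := by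
    field_simp
  nlinarith [sq_nonneg ((z : ℝ) / (2 * N))]
end

section
/- Let A and B be positive semidefinite operators on a finite-dimensional Hilbert space with ker A ∩ ker B = {0}. Then the smallest eigenvalue of A + B is at least min(λ₁(A), λ₁(B)) · sin²(θ/2), where λ₁ denotes the smallest nonzero eigenvalue and cos θ = max{|⟨u|v⟩| : u ∈ ker A, v ∈ ker B, ‖u‖ = ‖v‖ = 1} (with θ ∈ (0, π/2]). -/
/-!
Let `a`, `b` be the orthogonal projections of `w` onto `ker A` and `ker B`, and
`m = min (λ₁ A) (λ₁ B)`. Expanding in an eigenbasis of `A`, where `w - a` has no component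
along the kernel, gives `re ⟪w, A w⟫ ≥ λ₁(A) ‖w - a‖²`; likewise for `B`, so
`re ⟪w, (A + B) w⟫ ≥ m (2 ‖w‖² - ‖a‖² - ‖b‖²)`. Now `‖a‖² + ‖b‖² = re ⟪a + b, w⟫ ≤ ‖a + b‖ ‖w‖`,
while the overlap bound gives `‖a + b‖² ≤ (1 + cos θ) (‖a‖² + ‖b‖²)`; together
`‖a‖² + ‖b‖² ≤ (1 + cos θ) ‖w‖²`, whence `re ⟪w, (A + B) w⟫ ≥ m (1 - cos θ) ‖w‖²`, and
`1 - cos θ = 2 sin² (θ / 2)`.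
-/

open Matrix Real Finset ComplexOrder
open LinearMap Module.End RCLike WithLp
open scoped InnerProductSpace

section InnerProductSpace

variable {𝕜 E : Type*} [RCLike 𝕜] [NormedAddCommGroup E] [InnerProductSpace 𝕜 E]

theorem norm_add_sq_le_of_re_inner_le {a b : E} {c : ℝ} (hc : 0 ≤ c)
    (hab : re ⟪a, b⟫_𝕜 ≤ c * (‖a‖ * ‖b‖)) :
    ‖a + b‖ ^ 2 ≤ (1 + c) * (‖a‖ ^ 2 + ‖b‖ ^ 2) := by
  have hamgm : 2 * (‖a‖ * ‖b‖) ≤ ‖a‖ ^ 2 + ‖b‖ ^ 2 := by nlinarith [sq_nonneg (‖a‖ - ‖b‖)]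
  rw [norm_add_sq (𝕜 := 𝕜)]
  nlinarith

theorem norm_inner_le_mul_of_forall_norm_eq_one {K L : Submodule 𝕜 E} {c : ℝ}
    (h : ∀ u ∈ K, ∀ v ∈ L, ‖u‖ = 1 → ‖v‖ = 1 → ‖⟪u, v⟫_𝕜‖ ≤ c) :
    ∀ u ∈ K, ∀ v ∈ L, ‖⟪u, v⟫_𝕜‖ ≤ c * (‖u‖ * ‖v‖) := by
  intro u hu v hv
  rcases eq_or_ne u 0 with rfl | hu0
  · simp
  rcases eq_or_ne v 0 with rfl | hv0
  · simp
  have hunit := h _ (K.smul_mem (‖u‖⁻¹ : 𝕜) hu) _ (L.smul_mem (‖v‖⁻¹ : 𝕜) hv)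
    (norm_smul_inv_norm hu0) (norm_smul_inv_norm hv0)
  rw [inner_smul_left, inner_smul_right, norm_mul, norm_mul, norm_conj, norm_inv, norm_inv,
    norm_ofReal, norm_ofReal, abs_norm, abs_norm] at hunit
  have hnorm : 0 < ‖u‖ * ‖v‖ := mul_pos (norm_pos_iff.2 hu0) (norm_pos_iff.2 hv0)
  rw [← div_le_iff₀ hnorm]
  exact (le_of_eq (by ring)).trans hunit

namespace Submodule

variable {K L : Submodule 𝕜 E} [K.HasOrthogonalProjection] [L.HasOrthogonalProjection]

theorem norm_sq_starProjection_add_le {c : ℝ} (hc : 0 ≤ c)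
    (hKL : ∀ u ∈ K, ∀ v ∈ L, ‖⟪u, v⟫_𝕜‖ ≤ c * (‖u‖ * ‖v‖)) (w : E) :
    ‖K.starProjection w‖ ^ 2 + ‖L.starProjection w‖ ^ 2 ≤ (1 + c) * ‖w‖ ^ 2 := by
  set a := K.starProjection w
  set b := L.starProjection w
  have hs : ‖a‖ ^ 2 + ‖b‖ ^ 2 ≤ ‖a + b‖ * ‖w‖ := calc
    ‖a‖ ^ 2 + ‖b‖ ^ 2 = re ⟪a + b, w⟫_𝕜 := by
      rw [inner_add_left, map_add, K.re_inner_starProjection_eq_normSq,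
        L.re_inner_starProjection_eq_normSq]
      rfl
    _ ≤ ‖a + b‖ * ‖w‖ := re_inner_le_norm _ _
  have hab := norm_add_sq_le_of_re_inner_le hc
    ((re_le_norm _).trans (hKL a (K.starProjection_apply_mem w) b (L.starProjection_apply_mem w)))
  have hsq : (‖a‖ ^ 2 + ‖b‖ ^ 2) ^ 2 ≤ (1 + c) * ‖w‖ ^ 2 * (‖a‖ ^ 2 + ‖b‖ ^ 2) := calc
    (‖a‖ ^ 2 + ‖b‖ ^ 2) ^ 2 ≤ (‖a + b‖ * ‖w‖) ^ 2 := by gcongr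
    _ = ‖a + b‖ ^ 2 * ‖w‖ ^ 2 := mul_pow _ _ _
    _ ≤ (1 + c) * (‖a‖ ^ 2 + ‖b‖ ^ 2) * ‖w‖ ^ 2 := by gcongr
    _ = (1 + c) * ‖w‖ ^ 2 * (‖a‖ ^ 2 + ‖b‖ ^ 2) := by ring
  by_contra! h
  have hpos : 0 < ‖a‖ ^ 2 + ‖b‖ ^ 2 := lt_of_le_of_lt (by positivity) h
  nlinarith [mul_lt_mul_of_pos_right h hpos]

theorem one_sub_mul_norm_sq_le {c : ℝ} (hc : 0 ≤ c)
    (hKL : ∀ u ∈ K, ∀ v ∈ L, ‖⟪u, v⟫_𝕜‖ ≤ c * (‖u‖ * ‖v‖)) (w : E) :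
    (1 - c) * ‖w‖ ^ 2 ≤ ‖Kᗮ.starProjection w‖ ^ 2 + ‖Lᗮ.starProjection w‖ ^ 2 := by
  have := norm_sq_starProjection_add_le hc hKL w
  have := K.norm_sq_eq_add_norm_sq_starProjection w
  have := L.norm_sq_eq_add_norm_sq_starProjection w
  linarith

end Submodule

namespace LinearMap.IsSymmetric

variable [FiniteDimensional 𝕜 E] {S T : E →ₗ[𝕜] E}

theorem mul_norm_sq_le_re_inner_of_mem_ker_orthogonal (hT : T.IsSymmetric) {m : ℝ}
    (hm : ∀ μ : ℝ, μ ≠ 0 → HasEigenvalue T μ → m ≤ μ) {x : E} (hx : x ∈ (ker T)ᗮ) :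
    m * ‖x‖ ^ 2 ≤ re ⟪x, T x⟫_𝕜 := by
  have happly := hT.apply_eigenvectorBasis rfl
  have happly_self := hT.eigenvectorBasis_apply_self_apply rfl
  have heig := hT.hasEigenvalue_eigenvalues rfl
  set b := hT.eigenvectorBasis rfl
  set e := hT.eigenvalues rfl
  have hnorm : ‖x‖ ^ 2 = ∑ i, ‖b.repr x i‖ ^ 2 := by
    rw [← b.repr.norm_map x, EuclideanSpace.norm_sq_eq]
  have hinner : re ⟪x, T x⟫_𝕜 = ∑ i, e i * ‖b.repr x i‖ ^ 2 := by
    rw [← b.repr.inner_map_map, PiLp.inner_apply, map_sum]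
    refine sum_congr rfl fun i _ => ?_
    rw [happly_self, RCLike.inner_apply, mul_assoc, mul_conj]
    norm_cast
  rw [hnorm, hinner, mul_sum]
  refine sum_le_sum fun i _ => ?_
  by_cases he : e i = 0
  · have hbi : b i ∈ ker T := by
      rw [mem_ker, happly, he, ofReal_zero, zero_smul]
    rw [b.repr_apply_apply, Submodule.inner_right_of_mem_orthogonal hbi hx]
    simp [he]
  · exact mul_le_mul_of_nonneg_right (hm _ he (heig i)) (sq_nonneg _)

theorem mul_norm_sq_starProjection_ker_orthogonal_le (hT : T.IsSymmetric) {m : ℝ}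
    (hm : ∀ μ : ℝ, μ ≠ 0 → HasEigenvalue T μ → m ≤ μ) (w : E) :
    m * ‖(ker T)ᗮ.starProjection w‖ ^ 2 ≤ re ⟪w, T w⟫_𝕜 := by
  set x := (ker T)ᗮ.starProjection w
  have hTa : T ((ker T).starProjection w) = 0 := (ker T).starProjection_apply_mem w
  have hw : ⟪w, T w⟫_𝕜 = ⟪x, T x⟫_𝕜 := by
    conv_lhs => rw [← (ker T).starProjection_add_starProjection_orthogonal w]
    rw [map_add, hTa, zero_add, inner_add_left, ← hT, hTa, inner_zero_left, zero_add]
  rw [hw]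
  exact hT.mul_norm_sq_le_re_inner_of_mem_ker_orthogonal hm ((ker T)ᗮ.starProjection_apply_mem w)

theorem mul_one_sub_mul_norm_sq_le_re_inner_add (hS : S.IsSymmetric) (hT : T.IsSymmetric)
    {m c : ℝ} (hm : 0 ≤ m) (hmS : ∀ μ : ℝ, μ ≠ 0 → HasEigenvalue S μ → m ≤ μ)
    (hmT : ∀ μ : ℝ, μ ≠ 0 → HasEigenvalue T μ → m ≤ μ) (hc : 0 ≤ c)
    (hker : ∀ u ∈ ker S, ∀ v ∈ ker T, ‖⟪u, v⟫_𝕜‖ ≤ c * (‖u‖ * ‖v‖)) (w : E) :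
    m * (1 - c) * ‖w‖ ^ 2 ≤ re ⟪w, (S + T) w⟫_𝕜 :=
  calc m * (1 - c) * ‖w‖ ^ 2
      ≤ m * (‖(ker S)ᗮ.starProjection w‖ ^ 2 + ‖(ker T)ᗮ.starProjection w‖ ^ 2) := by
        rw [mul_assoc]
        exact mul_le_mul_of_nonneg_left (Submodule.one_sub_mul_norm_sq_le hc hker w) hm
    _ ≤ re ⟪w, S w⟫_𝕜 + re ⟪w, T w⟫_𝕜 := by
        rw [mul_add]
        exact add_le_add (hS.mul_norm_sq_starProjection_ker_orthogonal_le hmS w)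
          (hT.mul_norm_sq_starProjection_ker_orthogonal_le hmT w)
    _ = re ⟪w, (S + T) w⟫_𝕜 := by rw [add_apply, inner_add_right, map_add]

end LinearMap.IsSymmetric

end InnerProductSpace

theorem EuclideanSpace.star_ofLp_dotProduct_ofLp {𝕜 ι : Type*} [RCLike 𝕜] [Fintype ι]
    (u v : EuclideanSpace 𝕜 ι) : star (ofLp u) ⬝ᵥ ofLp v = ⟪u, v⟫_𝕜 :=
  dotProduct_comm _ _

namespace Matrix

variable {𝕜 ι : Type*} [RCLike 𝕜] [Fintype ι] [DecidableEq ι] {A B : Matrix ι ι 𝕜}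

theorem hasEigenvalue_toEuclideanLin_iff {μ : 𝕜} :
    HasEigenvalue A.toEuclideanLin μ ↔ ∃ v : ι → 𝕜, v ≠ 0 ∧ A *ᵥ v = μ • v := by
  constructor
  · intro h
    obtain ⟨v, hv⟩ := h.exists_hasEigenvector
    exact ⟨ofLp v, by simpa using hv.2, congrArg ofLp hv.apply_eq_smul⟩
  · rintro ⟨v, hv0, hv⟩
    have hv' : A.toEuclideanLin (toLp 2 v) = μ • toLp 2 v := congrArg (toLp 2) hv
    have hv0' : toLp 2 v ≠ 0 := by simpa using hv0
    exact hasEigenvalue_of_hasEigenvector ⟨mem_eigenspace_iff.2 hv', hv0'⟩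

theorem PosSemidef.nonneg_of_mulVec_eq_smul (hA : A.PosSemidef) {μ : ℝ} {v : ι → 𝕜}
    (hv0 : v ≠ 0) (hv : A *ᵥ v = (μ : 𝕜) • v) : 0 ≤ μ := by
  have h : HasEigenvalue A.toEuclideanLin (μ : 𝕜) :=
    hasEigenvalue_toEuclideanLin_iff.2 ⟨v, hv0, hv⟩
  have hpos : A.toEuclideanLin.IsPositive := isPositive_toEuclideanLin_iff.2 hA
  exact eigenvalue_nonneg_of_nonneg h hpos.re_inner_nonneg_right

theorem re_inner_toEuclideanLin_of_mulVec_eq_smul {μ : ℝ} {v : ι → 𝕜}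
    (hv : A *ᵥ v = (μ : 𝕜) • v) :
    re ⟪toLp 2 v, A.toEuclideanLin (toLp 2 v)⟫_𝕜 = μ * ‖toLp 2 v‖ ^ 2 := by
  rw [inner_product_apply_eigenvector (congrArg (toLp 2) hv), ← ofReal_pow, ← ofReal_mul,
    ofReal_re]

theorem norm_inner_le_of_mem_ker_toEuclideanLin {c : ℝ}
    (h : ∀ u v : ι → 𝕜, A *ᵥ u = 0 → B *ᵥ v = 0 → star u ⬝ᵥ u = 1 → star v ⬝ᵥ v = 1 →
      ‖star u ⬝ᵥ v‖ ≤ c) :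
    ∀ u ∈ ker A.toEuclideanLin, ∀ v ∈ ker B.toEuclideanLin, ‖⟪u, v⟫_𝕜‖ ≤ c * (‖u‖ * ‖v‖) := by
  refine norm_inner_le_mul_of_forall_norm_eq_one fun u hu v hv hu1 hv1 => ?_
  have hunit : ∀ x : EuclideanSpace 𝕜 ι, ‖x‖ = 1 → star (ofLp x) ⬝ᵥ ofLp x = 1 := by
    intro x hx
    rw [EuclideanSpace.star_ofLp_dotProduct_ofLp, inner_self_eq_norm_sq_to_K, hx, ofReal_one,
      one_pow]
  rw [← EuclideanSpace.star_ofLp_dotProduct_ofLp]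
  exact h _ _ (congrArg ofLp hu) (congrArg ofLp hv) (hunit u hu1) (hunit v hv1)

end Matrix

theorem stmt_17_general {n : ℕ} (A B : Matrix (Fin n) (Fin n) ℂ)
    (hA : A.PosSemidef) (hB : B.PosSemidef)
    (lamA lamB : ℝ)
    (hlamA : IsLeast {μ : ℝ | μ ≠ 0 ∧ ∃ v : Fin n → ℂ, v ≠ 0 ∧ A.mulVec v = (μ : ℂ) • v} lamA)
    (hlamB : IsLeast {μ : ℝ | μ ≠ 0 ∧ ∃ v : Fin n → ℂ, v ≠ 0 ∧ B.mulVec v = (μ : ℂ) • v} lamB)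
    (θ : ℝ)
    (hcos : IsGreatest {r : ℝ | ∃ u v : Fin n → ℂ,
        A.mulVec u = 0 ∧ B.mulVec v = 0 ∧
        star u ⬝ᵥ u = 1 ∧ star v ⬝ᵥ v = 1 ∧
        r = ‖star u ⬝ᵥ v‖} (Real.cos θ)) :
    ∀ (μ : ℝ) (w : Fin n → ℂ), w ≠ 0 → (A + B).mulVec w = (μ : ℂ) • w →
      min lamA lamB * Real.sin (θ / 2) ^ 2 ≤ μ := by
  intro μ w hw heig
  have hm : 0 ≤ min lamA lamB := by
    obtain ⟨⟨-, vA, hvA0, hvA⟩, -⟩ := hlamA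
    obtain ⟨⟨-, vB, hvB0, hvB⟩, -⟩ := hlamB
    exact le_min (hA.nonneg_of_mulVec_eq_smul hvA0 hvA) (hB.nonneg_of_mulVec_eq_smul hvB0 hvB)
  have hc : 0 ≤ cos θ := by
    obtain ⟨u, v, -, -, -, -, h⟩ := hcos.1
    exact h ▸ norm_nonneg _
  have hbound := (isSymmetric_toEuclideanLin_iff.2 hA.1).mul_one_sub_mul_norm_sq_le_re_inner_add
    (isSymmetric_toEuclideanLin_iff.2 hB.1) hm
    (fun ν hν h => (min_le_left _ _).trans (hlamA.2 ⟨hν, hasEigenvalue_toEuclideanLin_iff.1 h⟩))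
    (fun ν hν h => (min_le_right _ _).trans (hlamB.2 ⟨hν, hasEigenvalue_toEuclideanLin_iff.1 h⟩))
    hc (norm_inner_le_of_mem_ker_toEuclideanLin fun u v hu hv hu1 hv1 =>
      hcos.2 ⟨u, v, hu, hv, hu1, hv1, rfl⟩) (toLp 2 w)
  rw [← map_add, re_inner_toEuclideanLin_of_mulVec_eq_smul heig] at hbound
  have hsin : sin (θ / 2) ^ 2 ≤ 1 - cos θ := by
    rw [sin_sq_eq_half_sub, mul_div_cancel₀ θ two_ne_zero]
    linarith [cos_le_one θ]
  have hw0 : toLp 2 w ≠ 0 := by simpa using hw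
  refine le_of_mul_le_mul_right ?_ (by positivity : 0 < ‖toLp 2 w‖ ^ 2)
  calc min lamA lamB * sin (θ / 2) ^ 2 * ‖toLp 2 w‖ ^ 2
      ≤ min lamA lamB * (1 - cos θ) * ‖toLp 2 w‖ ^ 2 := by gcongr
    _ ≤ μ * ‖toLp 2 w‖ ^ 2 := hbound

/-- Kitaev's geometric lemma: for positive semidefinite operators `A`, `B` on a
finite-dimensional Hilbert space whose kernels intersect trivially, the smallest
eigenvalue of `A + B` is at least `min(λ₁(A), λ₁(B)) · sin²(θ/2)`, where
`λ₁` denotes the smallest nonzero eigenvalue and `cos θ` is the maximal overlap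
between unit vectors of the two kernels, with `θ ∈ (0, π/2]`. -/
theorem stmt_17 {n : ℕ} (A B : Matrix (Fin n) (Fin n) ℂ)
    (hA : A.PosSemidef) (hB : B.PosSemidef)
    (hkerA : ∃ u : Fin n → ℂ, u ≠ 0 ∧ A.mulVec u = 0)
    (hkerB : ∃ v : Fin n → ℂ, v ≠ 0 ∧ B.mulVec v = 0)
    (hker : ∀ v : Fin n → ℂ, A.mulVec v = 0 → B.mulVec v = 0 → v = 0)
    (lamA lamB : ℝ)
    (hlamA : IsLeast {μ : ℝ | μ ≠ 0 ∧ ∃ v : Fin n → ℂ, v ≠ 0 ∧ A.mulVec v = (μ : ℂ) • v} lamA)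
    (hlamB : IsLeast {μ : ℝ | μ ≠ 0 ∧ ∃ v : Fin n → ℂ, v ≠ 0 ∧ B.mulVec v = (μ : ℂ) • v} lamB)
    (θ : ℝ) (hθ0 : 0 < θ) (hθ1 : θ ≤ π / 2)
    (hcos : IsGreatest {r : ℝ | ∃ u v : Fin n → ℂ,
        A.mulVec u = 0 ∧ B.mulVec v = 0 ∧
        star u ⬝ᵥ u = 1 ∧ star v ⬝ᵥ v = 1 ∧
        r = ‖star u ⬝ᵥ v‖} (Real.cos θ)) :
    ∀ (μ : ℝ) (w : Fin n → ℂ), w ≠ 0 → (A + B).mulVec w = (μ : ℂ) • w →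
      min lamA lamB * Real.sin (θ / 2) ^ 2 ≤ μ :=
  stmt_17_general A B hA hB lamA lamB hlamA hlamB θ hcos
end
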